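/- arXiv:2503.05407 — 4 statements merged into one kernel-verified Lean document; each statement's English description precedes it below -/
import Mathlib

section
/- If an indecomposable representation V of the leg-extended quiver Q_d has some non-injective leg arrow, then V contains a direct summand supported on a segment of one leg with all dimensions equal to 1; in particular the dimension vector of V is a real root (positive root of a type-A subdiagram). -/
section QuiverDefs

variable {V A : Type} [Fintype V] [Fintype A] [DecidableEq V]

/-- The Euler form of the quiver with arrows `a : s a → t a`. -/
def eulerForm (s t : A → V) (d e : V → ℤ) : ℤ :=
  (∑ i, d i * e i) - ∑ a, d (s a) * e (t a)

/-- The symmetrized Euler form. -/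
def symForm (s t : A → V) (d e : V → ℤ) : ℤ :=
  eulerForm s t d e + eulerForm s t e d

/-- The simple reflection at vertex `i`. -/
def reflAt (s t : A → V) (i : V) (d : V → ℤ) : V → ℤ :=
  fun j => d j - symForm s t d (Pi.single i 1) * ((Pi.single i 1 : V → ℤ) j)

def adjacent (s t : A → V) (i j : V) : Prop :=
  ∃ a, (s a = i ∧ t a = j) ∨ (s a = j ∧ t a = i)

def connectedSupport (s t : A → V) (f : V → ℤ) : Prop :=
  ∀ i j, f i ≠ 0 → f j ≠ 0 →
    Relation.ReflTransGen (fun p q => adjacent s t p q ∧ f p ≠ 0 ∧ f q ≠ 0) i j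

/-- Membership in the fundamental domain. -/
def inFund (s t : A → V) (f : V → ℤ) : Prop :=
  f ≠ 0 ∧ (∀ i, 0 ≤ f i) ∧ connectedSupport s t f ∧
    ∀ i, symForm s t f (Pi.single i 1) ≤ 0

/-- Imaginary roots: Weyl group translates of the fundamental domain. -/
inductive IsImaginaryRoot (s t : A → V) : (V → ℤ) → Prop
  | fund (f) : inFund s t f → IsImaginaryRoot s t f
  | refl (i f) : IsImaginaryRoot s t f → IsImaginaryRoot s t (reflAt s t i f)

/-- Real roots: Weyl group translates of the coordinate vectors. -/
inductive IsRealRoot (s t : A → V) : (V → ℤ) → Prop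
  | simple (i : V) : IsRealRoot s t (Pi.single i 1)
  | refl (i f) : IsRealRoot s t f → IsRealRoot s t (reflAt s t i f)

variable (K : Type) [Field K]

/-- The representation space of the quiver at dimension vector `n`. -/
def QRepSp (s t : A → V) (n : V → ℕ) : Type :=
  ∀ a : A, Matrix (Fin (n (t a))) (Fin (n (s a))) K

def IsEndo (s t : A → V) {n : V → ℕ} (x : QRepSp K s t n)
    (φ : ∀ i, Matrix (Fin (n i)) (Fin (n i)) K) : Prop :=
  ∀ a, φ (t a) * x a = x a * φ (s a)

/-- A representation is indecomposable if it is nonzero and admits no nontrivial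
idempotent endomorphism. -/
def Indecomposable (s t : A → V) {n : V → ℕ} (x : QRepSp K s t n) : Prop :=
  (∃ i, n i ≠ 0) ∧
  ∀ φ, IsEndo K s t x φ → (∀ i, φ i * φ i = φ i) →
    (∀ i, φ i = 0) ∨ (∀ i, φ i = 1)

/-- Isomorphism of representations (same orbit of the base change group). -/
def IsIso (s t : A → V) {n : V → ℕ} (x y : QRepSp K s t n) : Prop :=
  ∃ g : ∀ i, (Matrix (Fin (n i)) (Fin (n i)) K)ˣ,
    ∀ a, (g (t a)).1 * x a = y a * (g (s a)).1

variable (s t : A → V)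

/-- Vertices of the leg-extended quiver `Q_d`: pairs `(i,k)`, where `k : Fin (d i)`
represents the vertex `(i, k+1)` of the paper. -/
abbrev LegVertex (d : V → ℕ) : Type := Σ i : V, Fin (d i)

/-- Leg arrows `β_{(i,k)} : (i,k) → (i,k+1)` of `Q_d`. -/
abbrev LegArrow (d : V → ℕ) : Type := Σ i : V, {k : Fin (d i) // (k : ℕ) + 1 < d i}

/-- The arrows of `Q_d` coming from arrows of `Q` (joining the tops of the legs). -/
abbrev OrigArrow (d : V → ℕ) : Type := {a : A // 0 < d (s a) ∧ 0 < d (t a)}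

/-- Arrows of the leg-extended quiver `Q_d`. -/
abbrev QdArrow (d : V → ℕ) : Type := LegArrow d ⊕ OrigArrow s t d

/-- Source map of `Q_d`. -/
def QdSrc (d : V → ℕ) : QdArrow s t d → LegVertex d
  | Sum.inl ⟨i, k, _⟩ => ⟨i, k⟩
  | Sum.inr ⟨a, h⟩ => ⟨s a, ⟨d (s a) - 1, by omega⟩⟩

/-- Target map of `Q_d`. -/
def QdTgt (d : V → ℕ) : QdArrow s t d → LegVertex d
  | Sum.inl ⟨i, k, h⟩ => ⟨i, ⟨(k : ℕ) + 1, h⟩⟩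
  | Sum.inr ⟨a, h⟩ => ⟨t a, ⟨d (t a) - 1, by omega⟩⟩

variable [DecidableEq A]

/-!
Let `v ≠ 0` be killed by the leg arrow leaving level `k` of the leg at `i`, and let `l ≤ k` be
the lowest level such that `v = C(l,k) u` for the composite `C(l,k)` of the leg arrows. Choose a
covector `ξ` with `ξ v = 1` vanishing on the image of `C(l-1,k)`. The rank-one maps
`(C(l,j) u) (ξ C(j,k))` at the levels `l ≤ j ≤ k`, and `0` elsewhere, form an idempotent
endomorphism: it commutes with the leg arrows because `β_k v = 0` and `ξ C(l-1,k) = 0`, and the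
arrows of `Q` only meet the tops of the legs, which lie above `k`. Indecomposability makes it the
identity, so the dimension vector is the indicator of the segment `[l, k]`; reflecting the simple
root at `(i,l)` successively at `(i,l+1), …, (i,k)` produces this indicator.
-/

open Matrix

section CastMatrix

variable {α : Type*}

def castMatrix {p q p' q' : ℕ} (hp : p = p') (hq : q = q') (M : Matrix (Fin p) (Fin q) α) :
    Matrix (Fin p') (Fin q') α :=
  reindex (finCongr hp) (finCongr hq) M

@[simp] lemma castMatrix_rfl {p q : ℕ} (M : Matrix (Fin p) (Fin q) α) :
    castMatrix rfl rfl M = M := by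
  simp [castMatrix]

@[simp] lemma castMatrix_castMatrix {p q p' q' p'' q'' : ℕ} (hp : p = p') (hq : q = q')
    (hp' : p' = p'') (hq' : q' = q'') (M : Matrix (Fin p) (Fin q) α) :
    castMatrix hp' hq' (castMatrix hp hq M) = castMatrix (hp.trans hp') (hq.trans hq') M := by
  subst hp hq hp' hq'; simp

lemma castMatrix_mul [NonUnitalNonAssocSemiring α] {p q r p' q' r' : ℕ} (hp : p = p')
    (hq hq' : q = q') (hr : r = r') (M : Matrix (Fin p) (Fin q) α) (N : Matrix (Fin q) (Fin r) α) :
    castMatrix hp hq M * castMatrix hq' hr N = castMatrix hp hr (M * N) := by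
  subst hp hq hr; simp

@[simp] lemma castMatrix_eq_zero_iff [Zero α] {p q p' q' : ℕ} (hp : p = p') (hq : q = q')
    {M : Matrix (Fin p) (Fin q) α} : castMatrix hp hq M = 0 ↔ M = 0 := by
  subst hp hq; simp

@[simp] lemma castMatrix_eq_one_iff [Zero α] [One α] {p p' : ℕ} (hp hp' : p = p')
    {M : Matrix (Fin p) (Fin p) α} : castMatrix hp hp' M = 1 ↔ M = 1 := by
  subst hp; simp

lemma castMatrix_mulVec_injective_iff [NonUnitalNonAssocSemiring α] {p q p' q' : ℕ}
    (hp : p = p') (hq : q = q') {M : Matrix (Fin p) (Fin q) α} :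
    Function.Injective (castMatrix hp hq M).mulVec ↔ Function.Injective M.mulVec := by
  subst hp hq; simp

end CastMatrix

section LinearAlgebra

variable {K}

lemma exists_ne_zero_mulVec_eq_zero {ι κ : Type*} [Fintype κ] {M : Matrix ι κ K}
    (h : ¬ Function.Injective M.mulVec) : ∃ v, v ≠ 0 ∧ M *ᵥ v = 0 := by
  rw [← coe_mulVecLin, injective_iff_map_eq_zero] at h
  push Not at h
  obtain ⟨v, hv, hne⟩ := h
  exact ⟨v, hne, hv⟩

lemma exists_dotProduct_eq_one_of_notMem {ι : Type*} [Fintype ι] [DecidableEq ι]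
    {W : Submodule K (ι → K)} {v : ι → K} (hv : v ∉ W) :
    ∃ ξ : ι → K, ξ ⬝ᵥ v = 1 ∧ ∀ w ∈ W, ξ ⬝ᵥ w = 0 := by
  obtain ⟨f, hfv, hWf⟩ := W.exists_le_ker_of_notMem hv
  have hf : ∀ w, (dotProductEquiv K ι).symm f ⬝ᵥ w = f w := fun w =>
    congrArg (· w) ((dotProductEquiv K ι).apply_symm_apply f)
  refine ⟨(f v)⁻¹ • (dotProductEquiv K ι).symm f, ?_, fun w hw => ?_⟩
  · rw [smul_dotProduct, hf, smul_eq_mul, inv_mul_cancel₀ hfv]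
  · rw [smul_dotProduct, hf, LinearMap.mem_ker.1 (hWf hw), smul_zero]

lemma eq_one_of_one_eq_vecMulVec {m : ℕ} {a b : Fin m → K} (h : 1 = vecMulVec a b)
    (hba : b ⬝ᵥ a = 1) : m = 1 := by
  have hle := rank_vecMulVec_le a b
  rw [← h, rank_one, Fintype.card_fin] at hle
  refine le_antisymm hle (Nat.pos_of_ne_zero ?_)
  rintro rfl
  simp at hba

end LinearAlgebra

section Chain

variable {K} {m : ℕ → ℕ} (B : ∀ j, Matrix (Fin (m (j + 1))) (Fin (m j)) K)

/-- The composite `B (b-1) * ⋯ * B a`; it is `1` for `b = a` and junk for `b < a`. -/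
def chainComp (a : ℕ) : ∀ b, Matrix (Fin (m b)) (Fin (m a)) K
  | 0 => if h : a = 0 then castMatrix (congrArg m h) rfl 1 else 0
  | b + 1 => if h : a = b + 1 then castMatrix (congrArg m h) rfl 1 else B b * chainComp a b

@[simp] lemma chainComp_self (a : ℕ) : chainComp B a a = 1 := by
  cases a <;> simp [chainComp]

lemma chainComp_succ {a b : ℕ} (h : a ≤ b) : chainComp B a (b + 1) = B b * chainComp B a b := by
  rw [chainComp, dif_neg (by omega)]

lemma chainComp_trans {a b c : ℕ} (hab : a ≤ b) (hbc : b ≤ c) :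
    chainComp B a c = chainComp B b c * chainComp B a b := by
  induction c, hbc using Nat.le_induction with
  | base => rw [chainComp_self, Matrix.one_mul]
  | succ c hbc ih => rw [chainComp_succ B (hab.trans hbc), chainComp_succ B hbc, ih, Matrix.mul_assoc]

lemma chainComp_mul_self_succ {a b : ℕ} (h : a < b) :
    chainComp B (a + 1) b * B a = chainComp B a b := by
  rw [chainComp_trans B (Nat.le_succ a) h, chainComp_succ B le_rfl, chainComp_self, Matrix.mul_one]

lemma dotProduct_chainComp {l j k : ℕ} (hlj : l ≤ j) (hjk : j ≤ k) (u : Fin (m l) → K)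
    (ξ : Fin (m k) → K) :
    (ξ ᵥ* chainComp B j k) ⬝ᵥ (chainComp B l j *ᵥ u) = ξ ⬝ᵥ (chainComp B l k *ᵥ u) := by
  rw [← dotProduct_mulVec, mulVec_mulVec, ← chainComp_trans B hlj hjk]

variable (l k : ℕ) (u : Fin (m l) → K) (ξ : Fin (m k) → K)

def intervalIdem (j : ℕ) : Matrix (Fin (m j)) (Fin (m j)) K :=
  if l ≤ j ∧ j ≤ k then vecMulVec (chainComp B l j *ᵥ u) (ξ ᵥ* chainComp B j k) else 0

variable {l k u ξ}

lemma intervalIdem_mul_comm (hbot : ∀ j, j + 1 = l → ξ ᵥ* chainComp B j k = 0)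
    (htop : B k *ᵥ (chainComp B l k *ᵥ u) = 0) (j : ℕ) :
    intervalIdem B l k u ξ (j + 1) * B j = B j * intervalIdem B l k u ξ j := by
  unfold intervalIdem
  split_ifs with hj₁ hj
  · rw [vecMulVec_mul, mul_vecMulVec, vecMul_vecMul, chainComp_mul_self_succ B (by omega),
      mulVec_mulVec, ← chainComp_succ B hj.1]
  · rw [vecMulVec_mul, vecMul_vecMul, chainComp_mul_self_succ B (by omega), hbot j (by omega),
      Matrix.mul_zero]
    ext
    simp [vecMulVec_apply]
  · obtain rfl : j = k := by omega
    rw [Matrix.zero_mul, mul_vecMulVec, htop, zero_vecMulVec]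
  · rw [Matrix.zero_mul, Matrix.mul_zero]

lemma intervalIdem_mul_self (hdot : ξ ⬝ᵥ (chainComp B l k *ᵥ u) = 1) (j : ℕ) :
    intervalIdem B l k u ξ j * intervalIdem B l k u ξ j = intervalIdem B l k u ξ j := by
  unfold intervalIdem
  split_ifs with h
  · rw [vecMulVec_mul_vecMulVec, dotProduct_chainComp B h.1 h.2, hdot, one_smul]
  · rw [Matrix.zero_mul]

lemma intervalIdem_ne_zero (hlk : l ≤ k) (hdot : ξ ⬝ᵥ (chainComp B l k *ᵥ u) = 1) :
    intervalIdem B l k u ξ k ≠ 0 := by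
  intro h
  have := congrArg (fun M => ξ ⬝ᵥ (M *ᵥ (chainComp B l k *ᵥ u))) h
  simp only [intervalIdem, if_pos (And.intro hlk le_rfl), chainComp_self, vecMul_one,
    vecMulVec_mulVec, hdot] at this
  simp only [MulOpposite.op_one, one_smul, zero_mulVec, dotProduct_zero] at this
  exact one_ne_zero (hdot.symm.trans this)

lemma dim_eq_of_intervalIdem_eq_one (hdot : ξ ⬝ᵥ (chainComp B l k *ᵥ u) = 1) {j : ℕ}
    (h : intervalIdem B l k u ξ j = 1) : m j = if l ≤ j ∧ j ≤ k then 1 else 0 := by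
  unfold intervalIdem at h
  split_ifs at h ⊢ with hj
  · exact eq_one_of_one_eq_vecMulVec h.symm (by rw [dotProduct_chainComp B hj.1 hj.2, hdot])
  · simpa using (congrArg rank h).symm

variable {B}

lemma exists_interval_data {k : ℕ} {v : Fin (m k) → K} (hv : v ≠ 0) (hBv : B k *ᵥ v = 0) :
    ∃ l ≤ k, ∃ (u : Fin (m l) → K) (ξ : Fin (m k) → K), ξ ⬝ᵥ (chainComp B l k *ᵥ u) = 1 ∧
      (∀ j, j + 1 = l → ξ ᵥ* chainComp B j k = 0) ∧ B k *ᵥ (chainComp B l k *ᵥ u) = 0 := by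
  classical
  have hex : ∃ l, v ∈ LinearMap.range (chainComp B l k).mulVecLin := ⟨k, v, by simp⟩
  obtain ⟨u, hu⟩ := Nat.find_spec hex
  rw [mulVecLin_apply] at hu
  obtain ⟨ξ, hξv, hξ⟩ : ∃ ξ : Fin (m k) → K, ξ ⬝ᵥ v = 1 ∧
      ∀ j, j + 1 = Nat.find hex → ξ ᵥ* chainComp B j k = 0 := by
    rcases Nat.eq_zero_or_pos (Nat.find hex) with h0 | hpos
    · obtain ⟨ξ, hξv, -⟩ := exists_dotProduct_eq_one_of_notMem (W := ⊥) (by simpa using hv)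
      exact ⟨ξ, hξv, by omega⟩
    · obtain ⟨ξ, hξv, hξ⟩ := exists_dotProduct_eq_one_of_notMem (Nat.find_min hex (by omega :
        Nat.find hex - 1 < Nat.find hex))
      refine ⟨ξ, hξv, fun j hj => ?_⟩
      obtain rfl : j = Nat.find hex - 1 := by omega
      ext q
      have hq := hξ _ ⟨Pi.single q 1, rfl⟩
      rwa [mulVecLin_apply, dotProduct_mulVec, dotProduct_single_one] at hq
  exact ⟨Nat.find hex, Nat.find_min' hex ⟨v, by simp⟩, u, ξ, by rwa [hu], hξ, by rwa [hu]⟩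

theorem exists_interval_idempotent {k : ℕ} {v : Fin (m k) → K} (hv : v ≠ 0)
    (hBv : B k *ᵥ v = 0) :
    ∃ l ≤ k, ∃ ψ : ∀ j, Matrix (Fin (m j)) (Fin (m j)) K,
      (∀ j, ψ (j + 1) * B j = B j * ψ j) ∧ (∀ j, ψ j * ψ j = ψ j) ∧ ψ k ≠ 0 ∧
      (∀ j, k < j → ψ j = 0) ∧ ∀ j, ψ j = 1 → m j = if l ≤ j ∧ j ≤ k then 1 else 0 := by
  obtain ⟨l, hlk, u, ξ, hdot, hbot, htop⟩ := exists_interval_data hv hBv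
  refine ⟨l, hlk, intervalIdem B l k u ξ, intervalIdem_mul_comm B hbot htop,
    intervalIdem_mul_self B hdot, intervalIdem_ne_zero B hlk hdot, fun j hj => ?_,
    fun j => dim_eq_of_intervalIdem_eq_one B hdot⟩
  rw [intervalIdem, if_neg (by omega)]

end Chain

section Leg

variable {K s t} {d : V → ℕ} (n : LegVertex d → ℕ)

section LegChain

omit [Fintype V] [Fintype A] [DecidableEq V] [DecidableEq A]

/-- The leg at `i`, extended by `0` beyond its end, becomes a chain indexed by `ℕ`. -/
def legDim (i : V) (j : ℕ) : ℕ := if h : j < d i then n ⟨i, ⟨j, h⟩⟩ else 0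

lemma legDim_eq {i : V} {j : ℕ} (h : j < d i) : legDim n i j = n ⟨i, ⟨j, h⟩⟩ := dif_pos h

lemma legDim_eq_of_fst_eq {i : V} {w : LegVertex d} (h : w.1 = i) : legDim n i w.2 = n w := by
  subst h
  exact legDim_eq n w.2.isLt

def legMap (x : QRepSp K (QdSrc s t d) (QdTgt s t d) n) (i : V) (j : ℕ) :
    Matrix (Fin (legDim n i (j + 1))) (Fin (legDim n i j)) K :=
  if h : j + 1 < d i then
    castMatrix (legDim_eq n h).symm (legDim_eq n (Nat.lt_of_succ_lt h)).symm
      (x (.inl ⟨i, ⟨j, Nat.lt_of_succ_lt h⟩, h⟩))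
  else 0

lemma castMatrix_legMap (x : QRepSp K (QdSrc s t d) (QdTgt s t d) n) {i : V} {κ : Fin (d i)}
    (h : (κ : ℕ) + 1 < d i) :
    castMatrix (legDim_eq n h) (legDim_eq n κ.isLt) (legMap n x i κ) = x (.inl ⟨i, κ, h⟩) := by
  rw [legMap, dif_pos h]
  exact (castMatrix_castMatrix _ _ _ _ _).trans (castMatrix_rfl _)

lemma legMap_mulVec_injective_iff (x : QRepSp K (QdSrc s t d) (QdTgt s t d) n) {i : V}
    {κ : Fin (d i)} (h : (κ : ℕ) + 1 < d i) :
    Function.Injective (legMap n x i κ).mulVec ↔ Function.Injective (x (.inl ⟨i, κ, h⟩)).mulVec := by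
  rw [← castMatrix_legMap n x h]
  exact (castMatrix_mulVec_injective_iff _ _).symm

end LegChain

omit [Fintype V] [Fintype A] [DecidableEq A]

variable {i : V} (ψ : ∀ j, Matrix (Fin (legDim n i j)) (Fin (legDim n i j)) K)

def ofLeg (w : LegVertex d) : Matrix (Fin (n w)) (Fin (n w)) K :=
  if h : w.1 = i then castMatrix (legDim_eq_of_fst_eq n h) (legDim_eq_of_fst_eq n h) (ψ w.2)
  else 0

lemma ofLeg_of_fst_eq {w : LegVertex d} (h : w.1 = i) :
    ofLeg n ψ w = castMatrix (legDim_eq_of_fst_eq n h) (legDim_eq_of_fst_eq n h) (ψ w.2) :=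
  dif_pos h

lemma ofLeg_of_fst_ne {w : LegVertex d} (h : w.1 ≠ i) : ofLeg n ψ w = 0 := dif_neg h

variable {ψ}

lemma ofLeg_isEndo {x : QRepSp K (QdSrc s t d) (QdTgt s t d) n}
    (hψ : ∀ j, ψ (j + 1) * legMap n x i j = legMap n x i j * ψ j) (htop : ψ (d i - 1) = 0) :
    IsEndo K (QdSrc s t d) (QdTgt s t d) x (ofLeg n ψ) := by
  have hofLeg_top : ∀ (j : V) (hj : 0 < d j), ofLeg n ψ ⟨j, ⟨d j - 1, by omega⟩⟩ = 0 := by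
    intro j hj
    by_cases h : j = i
    · subst h
      rw [ofLeg_of_fst_eq n ψ rfl, castMatrix_eq_zero_iff]
      exact htop
    · exact ofLeg_of_fst_ne n ψ h
  rintro (⟨j, κ, hκ⟩ | ⟨a, hsa, hta⟩)
  · by_cases h : j = i
    · subst h
      rw [ofLeg_of_fst_eq n ψ (w := QdTgt s t d (.inl ⟨j, κ, hκ⟩)) rfl,
        ofLeg_of_fst_eq n ψ (w := QdSrc s t d (.inl ⟨j, κ, hκ⟩)) rfl, ← castMatrix_legMap n x hκ]
      exact (castMatrix_mul _ _ _ _ _ _).trans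
        ((congrArg (castMatrix _ _) (hψ κ)).trans (castMatrix_mul _ _ _ _ _ _).symm)
    · rw [ofLeg_of_fst_ne n ψ (w := QdTgt s t d (.inl ⟨j, κ, hκ⟩)) h,
        ofLeg_of_fst_ne n ψ (w := QdSrc s t d (.inl ⟨j, κ, hκ⟩)) h, Matrix.zero_mul,
        Matrix.mul_zero]
  · rw [show ofLeg n ψ (QdTgt s t d (.inr ⟨a, hsa, hta⟩)) = 0 from hofLeg_top _ hta,
      show ofLeg n ψ (QdSrc s t d (.inr ⟨a, hsa, hta⟩)) = 0 from hofLeg_top _ hsa,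
      Matrix.zero_mul, Matrix.mul_zero]

lemma ofLeg_mul_self (hψ : ∀ j, ψ j * ψ j = ψ j) (w : LegVertex d) :
    ofLeg n ψ w * ofLeg n ψ w = ofLeg n ψ w := by
  by_cases h : w.1 = i
  · rw [ofLeg_of_fst_eq n ψ h, castMatrix_mul, hψ]
  · rw [ofLeg_of_fst_ne n ψ h, Matrix.zero_mul]

lemma dim_eq_of_ofLeg_eq_one {f : ℕ → ℕ} (hψ : ∀ j, ψ j = 1 → legDim n i j = f j)
    (h : ∀ w, ofLeg n ψ w = 1) (w : LegVertex d) : n w = if w.1 = i then f w.2 else 0 := by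
  have hw := h w
  split_ifs with hi
  · rw [ofLeg_of_fst_eq n ψ hi, castMatrix_eq_one_iff] at hw
    rw [← legDim_eq_of_fst_eq n hi, hψ _ hw]
  · rw [ofLeg_of_fst_ne n ψ hi] at hw
    simpa using (congrArg rank hw).symm

end Leg

section Roots

omit [DecidableEq A]

section GeneralQuiver

variable {s t}

lemma symForm_single_right (f : V → ℤ) (p : V) :
    symForm s t f (Pi.single p 1) =
      2 * f p - ∑ a, f (s a) * (Pi.single p 1 : V → ℤ) (t a) -
        ∑ a, (Pi.single p 1 : V → ℤ) (s a) * f (t a) := by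
  have hp : ∑ v, f v * (Pi.single p 1 : V → ℤ) v = f p := by simp [Pi.single_apply]
  rw [symForm, eulerForm, eulerForm, hp, Finset.sum_congr rfl fun v _ => mul_comm _ (f v), hp]
  ring

lemma reflAt_eq_add_single {f : V → ℤ} {p : V} (h : symForm s t f (Pi.single p 1) = -1) :
    reflAt s t p f = f + Pi.single p 1 := by
  funext j
  simp [reflAt, h]

end GeneralQuiver

variable (d : V → ℕ)

def legSegment (i : V) (l k : ℕ) (w : LegVertex d) : ℤ :=
  if w.1 = i ∧ l ≤ w.2 ∧ w.2 ≤ k then 1 else 0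

variable {d} {i : V} {l k : ℕ}

section LegSegment

omit [Fintype V]

omit [DecidableEq V] in
lemma legVertex_mk_eq_mk_iff {j : V} {κ : Fin (d j)} {m : ℕ} (hm : m < d i) :
    (⟨j, κ⟩ : LegVertex d) = ⟨i, ⟨m, hm⟩⟩ ↔ j = i ∧ (κ : ℕ) = m := by
  constructor
  · rintro ⟨⟩
    exact ⟨rfl, rfl⟩
  · rintro ⟨rfl, rfl⟩
    rfl

lemma legSegment_self (hl : l < d i) : legSegment d i l l = Pi.single ⟨i, ⟨l, hl⟩⟩ 1 := by
  funext ⟨j, κ⟩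
  by_cases hj : j = i
  · subst hj
    simp only [legSegment, Pi.single_apply, legVertex_mk_eq_mk_iff, true_and]
    split_ifs <;> omega
  · simp [legSegment, hj]

lemma legSegment_succ (hlk : l ≤ k) (hk : k + 1 < d i) :
    legSegment d i l (k + 1) = legSegment d i l k + Pi.single ⟨i, ⟨k + 1, hk⟩⟩ 1 := by
  funext ⟨j, κ⟩
  by_cases hj : j = i
  · subst hj
    simp only [legSegment, Pi.add_apply, Pi.single_apply, legVertex_mk_eq_mk_iff, true_and]
    split_ifs <;> omega
  · simp [legSegment, hj]

lemma legSegment_top (hk : k + 1 < d i) (j : V) (hj : 0 < d j) :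
    legSegment d i l k ⟨j, ⟨d j - 1, by omega⟩⟩ = 0 := by
  rw [legSegment, if_neg]
  rintro ⟨hj, -, hk'⟩
  dsimp only at hj hk'
  subst hj
  omega

end LegSegment

lemma symForm_legSegment_single (hlk : l ≤ k) (hk : k + 1 < d i) :
    symForm (QdSrc s t d) (QdTgt s t d) (legSegment d i l k) (Pi.single ⟨i, ⟨k + 1, hk⟩⟩ 1) =
      -1 := by
  have hp : legSegment d i l k ⟨i, ⟨k + 1, hk⟩⟩ = 0 := by simp [legSegment]
  have hin : ∑ a, legSegment d i l k (QdSrc s t d a) *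
      (Pi.single ⟨i, ⟨k + 1, hk⟩⟩ 1 : LegVertex d → ℤ) (QdTgt s t d a) = 1 := by
    rw [Fintype.sum_eq_single (.inl ⟨i, ⟨k, by omega⟩, hk⟩)]
    · simp [legSegment, QdSrc, QdTgt, hlk]
    rintro (⟨j, κ, hκ⟩ | ⟨a, hsa, hta⟩) hne
    · rw [QdTgt, Pi.single_apply, if_neg, mul_zero]
      rw [legVertex_mk_eq_mk_iff]
      rintro ⟨rfl, hκk⟩
      dsimp only at hκk
      apply hne
      simp only [Sum.inl.injEq, Sigma.mk.inj_iff, heq_eq_eq, true_and, Subtype.mk.injEq,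
        Fin.ext_iff]
      omega
    · rw [QdSrc, legSegment_top hk _ hsa, zero_mul]
  have hout : ∑ a, (Pi.single ⟨i, ⟨k + 1, hk⟩⟩ 1 : LegVertex d → ℤ) (QdSrc s t d a) *
      legSegment d i l k (QdTgt s t d a) = 0 := by
    refine Finset.sum_eq_zero fun a _ => ?_
    rcases a with ⟨j, κ, hκ⟩ | ⟨a, hsa, hta⟩
    · rw [QdSrc, QdTgt, Pi.single_apply]
      split_ifs with h
      · obtain ⟨rfl, hκk⟩ := (legVertex_mk_eq_mk_iff _).1 h
        rw [legSegment, if_neg fun ⟨_, _, hκk'⟩ => by dsimp only at hκk'; omega, mul_zero]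
      · rw [zero_mul]
    · rw [QdTgt, legSegment_top hk _ hta, mul_zero]
  rw [symForm_single_right, hp, hin, hout]
  norm_num

theorem isRealRoot_legSegment (hlk : l ≤ k) (hk : k < d i) :
    IsRealRoot (QdSrc s t d) (QdTgt s t d) (legSegment d i l k) := by
  induction k, hlk using Nat.le_induction with
  | base => rw [legSegment_self hk]; exact .simple _
  | succ k hlk ih =>
    rw [legSegment_succ hlk hk, ← reflAt_eq_add_single (symForm_legSegment_single s t hlk hk)]
    exact .refl _ _ (ih (by omega))

end Roots

/-- If an indecomposable representation `x` of the leg-extended quiver `Q_d` has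
some non-injective leg arrow, then (being indecomposable) it is a representation
supported on a segment of one leg with all dimensions equal to `1`; in particular
its dimension vector is a real root (a positive root of a type-`A` subdiagram).
(Here `k : Fin (d i)` encodes the paper's vertex `(i, k+1)`.) -/
theorem indecomposable_noninjective_leg
    (d : V → ℕ) (n : LegVertex d → ℕ)
    (x : QRepSp K (QdSrc s t d) (QdTgt s t d) n)
    (hind : Indecomposable K (QdSrc s t d) (QdTgt s t d) x)
    (hninj : ∃ l : LegArrow d, ¬ Function.Injective ((x (Sum.inl l)).mulVec)) :
    ∃ (i : V) (l k : ℕ), l ≤ k ∧ k < d i ∧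
      (∀ w : LegVertex d,
        n w = if w.1 = i ∧ l ≤ (w.2 : ℕ) ∧ (w.2 : ℕ) ≤ k then 1 else 0) ∧
      IsRealRoot (QdSrc s t d) (QdTgt s t d) (fun w => (n w : ℤ)) := by
  obtain ⟨⟨i, κ, hκ⟩, hninj⟩ := hninj
  rw [← legMap_mulVec_injective_iff n x hκ] at hninj
  obtain ⟨v, hv, hBv⟩ := exists_ne_zero_mulVec_eq_zero hninj
  obtain ⟨l, hlk, ψ, hcomm, hidem, hne, hzero, hdim⟩ := exists_interval_idempotent hv hBv
  rcases hind.2 (ofLeg n ψ) (ofLeg_isEndo n hcomm (hzero _ (by omega))) (ofLeg_mul_self n hidem)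
    with h0 | h1
  · have hψ := h0 ⟨i, κ⟩
    rw [ofLeg_of_fst_eq n ψ rfl, castMatrix_eq_zero_iff] at hψ
    exact absurd hψ hne
  have hn : ∀ w : LegVertex d, n w = if w.1 = i ∧ l ≤ (w.2 : ℕ) ∧ (w.2 : ℕ) ≤ κ then 1 else 0 :=
    fun w => by rw [ite_and]; exact dim_eq_of_ofLeg_eq_one n hdim h1 w
  refine ⟨i, l, κ, hlk, κ.isLt, hn, ?_⟩
  convert isRealRoot_legSegment s t hlk κ.isLt with w
  rw [hn, legSegment]
  split_ifs <;> rfl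

end QuiverDefs
end

section
/- Let Q be a quiver containing either a cycle or a pair of parallel arrows, and d a dimension vector with d_i ≥ 1 for all vertices on the cycle (respectively, on the two endpoints of the parallel arrows). Then over an infinite field, G_d acts on R_d(Q) with infinitely many orbits; in particular R_d(Q) is not spherical. -/
section QuiverDefs

variable {V A : Type} [Fintype V] [Fintype A] [DecidableEq V]

variable (K : Type) [Field K]

/-!
Put the matrix unit `E₀₀`, scaled by `α a`, on every arrow `a`. If `g ∈ G_d` carries this
representation to the one with scalars `β`, then the first columns of
`g (t a) * (α a • E₀₀) = (β a • E₀₀) * g (s a)` give `α a * γ (t a) = β a * γ (s a)` for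
`γ v = (g v)₀₀`, and `γ (s a) ≠ 0` as soon as `α a ≠ 0`, since the first column of `g (t a)` is
nonzero. Going once around a cycle of length `n` with all scalars `λ`, resp. `μ`, these relations
multiply to `λ ^ n = μ ^ n`; for parallel arrows `a, b` with scalars `1, λ`, resp. `1, μ`, they
give `λ = μ`. An infinite field has infinitely many distinct nonzero `n`-th powers.
-/

section Corner

variable {R : Type*} [CommRing R]

variable (R) in
def cornerUnit (p q : ℕ) : Matrix (Fin p) (Fin q) R :=
  Matrix.of fun i j => if (i : ℕ) = 0 ∧ (j : ℕ) = 0 then 1 else 0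

def cornerEntry {n : ℕ} (M : Matrix (Fin n) (Fin n) R) : R :=
  if h : 0 < n then M ⟨0, h⟩ ⟨0, h⟩ else 0

variable {p q : ℕ} {M : Matrix (Fin p) (Fin p) R} {N : Matrix (Fin q) (Fin q) R} {α β : R}

lemma mul_cornerUnit_apply_zero (hp : 0 < p) (hq : 0 < q) (i : Fin p) :
    (M * cornerUnit R p q) i ⟨0, hq⟩ = M i ⟨0, hp⟩ := by
  rw [Matrix.mul_apply, Finset.sum_eq_single ⟨0, hp⟩] <;> simp +contextual [cornerUnit, Fin.ext_iff]

lemma cornerUnit_mul_apply_zero (hq : 0 < q) (i : Fin p) :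
    (cornerUnit R p q * N) i ⟨0, hq⟩ = if (i : ℕ) = 0 then N ⟨0, hq⟩ ⟨0, hq⟩ else 0 := by
  rw [Matrix.mul_apply, Finset.sum_eq_single ⟨0, hq⟩] <;> simp +contextual [cornerUnit, Fin.ext_iff]

lemma col_zero_eq_of_mul_cornerUnit (hp : 0 < p) (hq : 0 < q)
    (h : M * (α • cornerUnit R p q) = (β • cornerUnit R p q) * N) (i : Fin p) :
    α * M i ⟨0, hp⟩ = β * if (i : ℕ) = 0 then N ⟨0, hq⟩ ⟨0, hq⟩ else 0 := by
  have hcol := congr_fun₂ h i ⟨0, hq⟩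
  rwa [Matrix.mul_smul, Matrix.smul_mul, Matrix.smul_apply, Matrix.smul_apply,
    mul_cornerUnit_apply_zero hp hq i, cornerUnit_mul_apply_zero hq] at hcol

lemma cornerEntry_eq_of_mul_cornerUnit (hp : 0 < p) (hq : 0 < q)
    (h : M * (α • cornerUnit R p q) = (β • cornerUnit R p q) * N) :
    α * cornerEntry M = β * cornerEntry N := by
  simpa [cornerEntry, hp, hq] using col_zero_eq_of_mul_cornerUnit hp hq h ⟨0, hp⟩

lemma exists_apply_ne_zero_of_isUnit [Nontrivial R] {n : ℕ} {M : Matrix (Fin n) (Fin n) R}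
    (hM : IsUnit M) (j : Fin n) : ∃ i, M i j ≠ 0 := by
  by_contra! hcol
  exact ((Matrix.isUnit_iff_isUnit_det M).mp hM).ne_zero
    (Matrix.det_eq_zero_of_column_eq_zero j hcol)

lemma cornerEntry_ne_zero_of_mul_cornerUnit [IsDomain R] (hp : 0 < p) (hq : 0 < q)
    (hM : IsUnit M) (hα : α ≠ 0) (h : M * (α • cornerUnit R p q) = (β • cornerUnit R p q) * N) :
    cornerEntry N ≠ 0 := by
  obtain ⟨i, hi⟩ := exists_apply_ne_zero_of_isUnit hM ⟨0, hp⟩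
  have hcol := col_zero_eq_of_mul_cornerUnit hp hq h i
  intro hN
  rw [cornerEntry, dif_pos hq] at hN
  simp [hN, hα, hi] at hcol

end Corner

lemma pow_card_eq_pow_card_of_perm {M ι : Type*} [CommMonoidWithZero M] [IsCancelMulZero M]
    [Nontrivial M] [Fintype ι] (σ : Equiv.Perm ι) {α β : M} {γ : ι → M} (hγ : ∀ i, γ i ≠ 0)
    (h : ∀ i, α * γ (σ i) = β * γ i) : α ^ Fintype.card ι = β ^ Fintype.card ι := by
  have hprod : α ^ Fintype.card ι * ∏ i, γ (σ i) = β ^ Fintype.card ι * ∏ i, γ i := by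
    simp only [← Finset.card_univ, ← Finset.prod_const, ← Finset.prod_mul_distrib, h]
  rw [Equiv.prod_comp] at hprod
  exact mul_right_cancel₀ (Finset.prod_ne_zero_iff.mpr fun i _ => hγ i) hprod

section Powers

variable {F : Type*} [Field F] {n : ℕ}

lemma finite_setOf_pow_eq (hn : 0 < n) (y : F) : {x : F | x ^ n = y}.Finite :=
  (Polynomial.nthRootsFinset n y).finite_toSet.subset fun x hx => by
    simpa [Polynomial.mem_nthRootsFinset hn] using hx

lemma infinite_image_pow_compl_zero [Infinite F] (hn : 0 < n) :
    ((· ^ n) '' {0}ᶜ : Set F).Infinite := fun hfin =>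
  (Set.finite_singleton 0).infinite_compl <| hfin.of_finite_fibers _ fun y _ =>
    (finite_setOf_pow_eq hn y).subset Set.inter_subset_right

lemma exists_seq_pow_injective [Infinite F] (hn : 0 < n) :
    ∃ φ : ℕ → F, (∀ k, φ k ≠ 0) ∧ Function.Injective fun k => φ k ^ n := by
  let e := (infinite_image_pow_compl_zero (F := F) hn).natEmbedding
  choose φ hφ0 hφ using fun k => (e k).2
  refine ⟨φ, hφ0, fun i j hij => e.injective (Subtype.ext ?_)⟩
  rw [← hφ i, ← hφ j]
  exact hij

end Powers

def cornerRep (s t : A → V) (d : V → ℕ) (α : A → K) : QRepSp K s t d :=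
  fun a => α a • cornerUnit K (d (t a)) (d (s a))

/-- If a quiver contains a cycle, or a pair of parallel arrows, with all dimensions
`≥ 1` on the relevant vertices, then over an infinite field the base change group
`G_d` acts on `R_d(Q)` with infinitely many orbits (so `R_d(Q)` is not
spherical): there are infinitely many pairwise non-isomorphic representations of
dimension vector `d`. -/
theorem infinitely_many_orbits_of_cycle_or_parallel
    [Infinite K] (s t : A → V) (d : V → ℕ)
    (h : (∃ (m : ℕ) (c : Fin (m + 1) → A),
            (∀ j, t (c j) = s (c (j + 1))) ∧ ∀ j, 1 ≤ d (s (c j))) ∨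
         (∃ a b : A, a ≠ b ∧ s a = s b ∧ t a = t b ∧ 1 ≤ d (s a) ∧ 1 ≤ d (t a))) :
    ∃ f : ℕ → QRepSp K s t d,
      ∀ j k, j ≠ k → ¬ IsIso K s t (f j) (f k) := by
  rcases h with ⟨m, c, hc, hd⟩ | ⟨a, b, hab, hs, ht, hsa, hta⟩
  · obtain ⟨φ, hφ0, hφ⟩ := exists_seq_pow_injective (F := K) m.succ_pos
    refine ⟨fun n => cornerRep K s t d fun _ => φ n, fun j k hjk ⟨g, hg⟩ => hjk (hφ ?_)⟩
    have hdt : ∀ i, 0 < d (t (c i)) := fun i => hc i ▸ hd (i + 1)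
    simpa only [Fintype.card_fin] using pow_card_eq_pow_card_of_perm (Equiv.addRight 1)
      (γ := fun i => cornerEntry (g (s (c i))).1)
      (fun i => cornerEntry_ne_zero_of_mul_cornerUnit (hdt i) (hd i) (g _).isUnit (hφ0 j)
        (hg (c i)))
      (fun i => hc i ▸ cornerEntry_eq_of_mul_cornerUnit (hdt i) (hd i) (hg (c i)))
  · classical
    let ψ := Infinite.natEmbedding K
    refine ⟨fun n => cornerRep K s t d (Function.update 1 b (ψ n)),
      fun j k hjk ⟨g, hg⟩ => hjk (ψ.injective ?_)⟩
    have hparallel := cornerEntry_eq_of_mul_cornerUnit hta hsa (hg a)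
    have hne := cornerEntry_ne_zero_of_mul_cornerUnit hta hsa (g _).isUnit (by simp [hab]) (hg a)
    have hscaled := cornerEntry_eq_of_mul_cornerUnit (ht ▸ hta) (hs ▸ hsa) (hg b)
    simp only [Function.update_self, Function.update_of_ne hab, Pi.one_apply, one_mul]
      at hparallel hscaled
    rw [← hs, ← ht, hparallel] at hscaled
    exact mul_right_cancel₀ hne hscaled

end QuiverDefs
end

section
/- Fix complete flags F_i^* in K^{d_i} for each vertex i, and let B_d ⊂ G_d = ∏_i GL(d_i) be the Borel subgroup stabilizing all flags. Then the restriction map p : R_{d̂}^{flag}(Q_d) → R_{d̂}(Q̄_d) from flag-type representations of the leg-extended quiver to representations of the legs-only quiver Q̄_d is G_{d̂}-equivariant, its image is a single G_{d̂}-orbit, and the G_{d̂}-stabilizer of the point corresponding to the fixed flags is isomorphic to B_d; consequently B_d-orbits in R_d(Q) correspond bijectively to G_{d̂}-orbits in R_{d̂}^{flag}(Q_d). -/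
/-! A flag-type representation of the `i`-th leg is a chain of injections
`K^1 → K^2 → ⋯ → K^{d_i}`; choosing bases of the `K^{k+1}` one vector at a time, each
extending the image of the previous one, conjugates it to the chain of standard inclusions.
An element of `G_{d̂}` fixes the standard inclusions exactly when each of its components is
the leading principal block of the next one, whose last row vanishes off the diagonal. Such
an element is therefore determined by its top components, and these range over the invertible
upper triangular matrices. -/

section Flags

variable {V A : Type} [Fintype V] [Fintype A] [DecidableEq V]
variable (K : Type) [Field K] (s t : A → V) (d : V → ℕ)

/-- Vertices `(i,k)` of the leg-extended quiver `Q_d`; `k : Fin (d i)` encodes the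
paper's vertex `(i,k+1)`. -/
abbrev LegV : Type := Σ i : V, Fin (d i)

/-- The canonical dimension vector `d̂` of `Q_d`: `d̂_{(i,k)} = k`. -/
abbrev dhat : LegV d → ℕ := fun w => (w.2 : ℕ) + 1

/-- Leg arrows `β_{(i,k)} : (i,k) → (i,k+1)`. -/
abbrev LegA : Type := Σ i : V, {k : Fin (d i) // (k : ℕ) + 1 < d i}

def legSrc : LegA d → LegV d := fun l => ⟨l.1, l.2.1⟩
def legTgt : LegA d → LegV d := fun l => ⟨l.1, ⟨(l.2.1 : ℕ) + 1, l.2.2⟩⟩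

/-- The base change group `G_{d̂}` of the leg-extended quiver. -/
abbrev Gd : Type := ∀ w : LegV d, (Matrix (Fin (dhat d w)) (Fin (dhat d w)) K)ˣ

/-- Representations of the legs-only quiver `Q̄_d` of dimension vector `d̂`. -/
abbrev BarRep : Type :=
  ∀ l : LegA d, Matrix (Fin (dhat d (legTgt d l))) (Fin (dhat d (legSrc d l))) K

/-- Representations of `Q` of dimension vector `d` (the fibre `R_d(Q)`). -/
abbrev QRep : Type := ∀ a : A, Matrix (Fin (d (t a))) (Fin (d (s a))) K

/-- The base point of `R_{d̂}(Q̄_d)`: each leg arrow is the standard inclusion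
`K^k → K^{k+1}` corresponding to the fixed complete flags. -/
def x0 : BarRep K d := fun _ r c => if (r : ℕ) = (c : ℕ) then 1 else 0

/-- The action of `G_{d̂}` on representations of the legs-only quiver. -/
def actBar (g : Gd K d) (y : BarRep K d) : BarRep K d :=
  fun l => ((g (legTgt d l)).1 * y l) * ((g (legSrc d l))⁻¹).1

/-- The top vertex `(i, d_i)` of the `i`-th leg. -/
def topV (hd : ∀ i, 0 < d i) (i : V) : LegV d :=
  ⟨i, ⟨d i - 1, by have := hd i; omega⟩⟩

/-- The component of `g ∈ G_{d̂}` at the top vertex of the `i`-th leg, viewed as a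
`d_i × d_i` matrix. -/
def topMat (hd : ∀ i, 0 < d i) (g : Gd K d) (i : V) :
    Matrix (Fin (d i)) (Fin (d i)) K :=
  Matrix.reindex
    (finCongr (by have := hd i; simp only [dhat, topV]; omega : dhat d (topV d hd i) = d i))
    (finCongr (by have := hd i; simp only [dhat, topV]; omega : dhat d (topV d hd i) = d i))
    (g (topV d hd i)).1

/-- The action of `G_{d̂}` on representations of the full leg-extended quiver
`Q_d` of dimension vector `d̂` (identified with pairs: the legs part and the
`R_d(Q)` part attached at the tops of the legs). -/
def actFull (hd : ∀ i, 0 < d i) (g : Gd K d) (z : BarRep K d × QRep K s t d) :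
    BarRep K d × QRep K s t d :=
  (actBar K d g z.1,
   fun a => (topMat K d hd g (t a) * z.2 a) * topMat K d hd (fun w => (g w)⁻¹) (s a))

/-- A representation of `Q_d` of dimension vector `d̂` is of flag type if all leg
arrows act by injective maps. -/
def FlagType (z : BarRep K d × QRep K s t d) : Prop :=
  ∀ l : LegA d, Function.Injective ((z.1 l).mulVec)

end Flags

open Matrix

section StandardInclusion

variable {R : Type*} [CommRing R] {m : Type*} {n : ℕ}

-- Written entrywise so that every component of `x0` is `incMat` by definition.
variable (R n) in
def incMat : Matrix (Fin (n + 1)) (Fin n) R :=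
  of fun r c => if (r : ℕ) = (c : ℕ) then 1 else 0

lemma incMat_eq_submatrix_one :
    incMat R n = (1 : Matrix (Fin (n + 1)) (Fin (n + 1)) R).submatrix id Fin.castSucc := by
  ext r c
  simp [incMat, one_apply, Fin.ext_iff]

lemma mul_incMat (M : Matrix m (Fin (n + 1)) R) :
    M * incMat R n = M.submatrix id Fin.castSucc := by
  rw [incMat_eq_submatrix_one]
  exact mul_submatrix_one (Equiv.refl _) Fin.castSucc M

lemma incMat_mul_apply_castSucc [Fintype m] (N : Matrix (Fin n) m R) (r : Fin n) (c : m) :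
    (incMat R n * N) r.castSucc c = N r c := by
  simp [incMat_eq_submatrix_one, mul_apply, one_apply]

lemma incMat_mul_apply_last [Fintype m] (N : Matrix (Fin n) m R) (c : m) :
    (incMat R n * N) (Fin.last n) c = 0 := by
  simp only [incMat_eq_submatrix_one, mul_apply, submatrix_apply, id, one_apply]
  exact Finset.sum_eq_zero fun x _ => by rw [if_neg (Fin.castSucc_ne_last x).symm, zero_mul]

lemma mul_incMat_eq_incMat_mul_iff {M : Matrix (Fin (n + 1)) (Fin (n + 1)) R}
    {N : Matrix (Fin n) (Fin n) R} :
    M * incMat R n = incMat R n * N ↔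
      M.submatrix Fin.castSucc Fin.castSucc = N ∧
        ∀ c : Fin n, M (Fin.last n) c.castSucc = 0 := by
  simp only [mul_incMat, ← Matrix.ext_iff, Fin.forall_fin_succ', submatrix_apply, id,
    incMat_mul_apply_castSucc, incMat_mul_apply_last]

lemma Matrix.mul_units_inv_eq_iff {k : Type*} [Fintype k] [DecidableEq k] (u : (Matrix k k R)ˣ)
    (a b : Matrix m k R) : a * (u⁻¹ : (Matrix k k R)ˣ).1 = b ↔ a = b * u.1 := by
  constructor
  · rintro rfl
    rw [Matrix.mul_assoc, Units.inv_mul, Matrix.mul_one]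
  · rintro rfl
    rw [Matrix.mul_assoc, Units.mul_inv, Matrix.mul_one]

lemma Matrix.IsUpperTriangular.of_submatrix_castSucc {M : Matrix (Fin (n + 1)) (Fin (n + 1)) R}
    (h : (M.submatrix Fin.castSucc Fin.castSucc).IsUpperTriangular)
    (hlast : ∀ c : Fin n, M (Fin.last n) c.castSucc = 0) : M.IsUpperTriangular := by
  intro r c hcr
  induction r using Fin.lastCases with
  | last =>
    induction c using Fin.lastCases with
    | last => exact absurd hcr (lt_irrefl _)
    | cast c => exact hlast c
  | cast r =>
    induction c using Fin.lastCases with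
    | last => exact absurd hcr (not_lt.2 (Fin.le_last _))
    | cast c => exact h (Fin.castSucc_lt_castSucc_iff.1 hcr)

lemma Matrix.IsUpperTriangular.isUnit_iff {k : Type*} [Fintype k] [DecidableEq k]
    [LinearOrder k] {M : Matrix k k R} (h : M.IsUpperTriangular) :
    IsUnit M ↔ ∀ i, IsUnit (M i i) := by
  rw [isUnit_iff_isUnit_det, det_of_isUpperTriangular h, IsUnit.prod_univ_iff]

lemma Matrix.IsUpperTriangular.submatrix_castLE {k : ℕ} {M : Matrix (Fin n) (Fin n) R}
    (h : M.IsUpperTriangular) (hkn : k ≤ n) :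
    (M.submatrix (Fin.castLE hkn) (Fin.castLE hkn)).IsUpperTriangular :=
  fun _ _ hcr => h hcr

lemma Matrix.IsUpperTriangular.isUnit_submatrix_castLE {k : ℕ} {M : Matrix (Fin n) (Fin n) R}
    (h : M.IsUpperTriangular) (hM : IsUnit M) (hkn : k ≤ n) :
    IsUnit (M.submatrix (Fin.castLE hkn) (Fin.castLE hkn)) :=
  ((h.submatrix_castLE hkn).isUnit_iff).2 fun _ => (h.isUnit_iff.1 hM) _

end StandardInclusion

section LegFrame

variable {F : Type*} [Field F] {D : ℕ}

lemma exists_units_mul_incMat_eq {n : ℕ} (M : Matrix (Fin (n + 1)) (Fin n) F)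
    (hM : Function.Injective M.mulVec) :
    ∃ N : (Matrix (Fin (n + 1)) (Fin (n + 1)) F)ˣ, N.1 * incMat F n = M := by
  obtain ⟨v, hv⟩ := exists_linearIndependent_snoc_of_lt_finrank (mulVec_injective_iff.1 hM)
    (by simp)
  have hN : IsUnit (of (Fin.snoc M.col v))ᵀ := by
    rw [← mulVec_injective_iff_isUnit, mulVec_injective_iff]
    exact hv
  refine ⟨hN.unit, ?_⟩
  ext r c
  simp [mul_incMat]

lemma Matrix.mulVec_injective_mul_units {m n : Type*} [Fintype n] [DecidableEq n]
    {M : Matrix m n F} (hM : Function.Injective M.mulVec) (U : (Matrix n n F)ˣ) :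
    Function.Injective (M * U.1).mulVec := by
  simpa only [Function.comp_def, mulVec_mulVec] using
    hM.comp (mulVec_injective_iff_isUnit.2 U.isUnit)

variable (y : ∀ k : ℕ, k + 1 < D → Matrix (Fin (k + 2)) (Fin (k + 1)) F)
  (hy : ∀ k h, Function.Injective (y k h).mulVec)

noncomputable def legFrame : (k : ℕ) → (Matrix (Fin (k + 1)) (Fin (k + 1)) F)ˣ
  | 0 => 1
  | k + 1 =>
    if h : k + 1 < D then
      (exists_units_mul_incMat_eq _ (mulVec_injective_mul_units (hy k h) (legFrame k))).choose
    else 1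

lemma legFrame_succ_mul_incMat (k : ℕ) (h : k + 1 < D) :
    (legFrame y hy (k + 1)).1 * incMat F (k + 1) = y k h * (legFrame y hy k).1 := by
  rw [legFrame, dif_pos h]
  exact (exists_units_mul_incMat_eq _ (mulVec_injective_mul_units (hy k h) _)).choose_spec

end LegFrame

section LegExtendedQuiver

variable {V A : Type} {K : Type} [Field K] {s t : A → V} {d : V → ℕ}

lemma exists_actBar_x0_eq (y : BarRep K d) (hy : ∀ l, Function.Injective (y l).mulVec) :
    ∃ g : Gd K d, actBar K d g (x0 K d) = y := by
  let frame (i : V) := legFrame (fun k h => y ⟨i, ⟨⟨k, by omega⟩, h⟩⟩) (fun _ _ => hy _)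
  refine ⟨fun w => frame w.1 w.2, funext fun ⟨i, ⟨k, hk⟩⟩ => ?_⟩
  exact (mul_units_inv_eq_iff _ _ _).2 (legFrame_succ_mul_incMat _ _ k hk)

lemma actBar_x0_eq_x0_iff (g : Gd K d) :
    actBar K d g (x0 K d) = x0 K d ↔
      ∀ l : LegA d,
        (g (legTgt d l)).1.submatrix Fin.castSucc Fin.castSucc = (g (legSrc d l)).1 ∧
          ∀ c : Fin ((l.2.1 : ℕ) + 1), (g (legTgt d l)).1 (Fin.last _) c.castSucc = 0 := by
  refine funext_iff.trans (forall_congr' fun l => ?_)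
  exact (mul_units_inv_eq_iff _ _ _).trans (mul_incMat_eq_incMat_mul_iff (n := (l.2.1 : ℕ) + 1))

section Stabilizer

variable {g : Gd K d} (hg : actBar K d g (x0 K d) = x0 K d)
include hg

lemma isUpperTriangular_of_actBar_x0_eq_x0 (w : LegV d) : (g w).1.IsUpperTriangular := by
  obtain ⟨i, k, hk⟩ := w
  induction k with
  | zero =>
    intro r c hcr
    have : (r : ℕ) < 1 := r.isLt
    simp only [id, Fin.lt_def] at hcr
    omega
  | succ k ih =>
    have hleg := (actBar_x0_eq_x0_iff g).1 hg ⟨i, ⟨k, by omega⟩, hk⟩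
    exact .of_submatrix_castSucc (hleg.1 ▸ ih (by omega)) hleg.2

lemma eq_submatrix_castLE_of_actBar_x0_eq_x0 (i : V) {k j : ℕ} (hkj : k ≤ j) (hj : j < d i) :
    (g ⟨i, k, hkj.trans_lt hj⟩).1 =
      (g ⟨i, j, hj⟩).1.submatrix (Fin.castLE (Nat.succ_le_succ hkj))
        (Fin.castLE (Nat.succ_le_succ hkj)) := by
  induction j, hkj using Nat.le_induction with
  | base => rfl
  | succ j hkj ih =>
    have hleg : (g ⟨i, j + 1, hj⟩).1.submatrix Fin.castSucc Fin.castSucc =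
        (g ⟨i, j, by omega⟩).1 :=
      ((actBar_x0_eq_x0_iff g).1 hg ⟨i, ⟨j, by omega⟩, hj⟩).1
    rw [ih (by omega), ← hleg]
    rfl

end Stabilizer

def actQ (b : ∀ i : V, (Matrix (Fin (d i)) (Fin (d i)) K)ˣ) (x : QRep K s t d) :
    QRep K s t d :=
  fun a => (b (t a)).1 * x a * ((b (s a))⁻¹).1

lemma actQ_actQ_inv (b : ∀ i : V, (Matrix (Fin (d i)) (Fin (d i)) K)ˣ) (x : QRep K s t d) :
    actQ b (actQ b⁻¹ x) = x := by
  funext a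
  simp [actQ, Matrix.mul_assoc]

section TopComponent

variable (hd : ∀ i, 0 < d i)

-- Its components are `topMat` by definition.
def topHom : Gd K d →* ∀ i : V, (Matrix (Fin (d i)) (Fin (d i)) K)ˣ :=
  MonoidHom.pi fun i =>
    (Units.map (reindexRingEquiv K (finCongr (Nat.sub_add_cancel (hd i)))).toMonoidHom).comp
      (Pi.evalMonoidHom _ (topV d hd i))

lemma topMat_mul (g h : Gd K d) (i : V) :
    topMat K d hd (g * h) i = topMat K d hd g i * topMat K d hd h i :=
  congrArg (fun u => (u i).1) (map_mul (topHom hd) g h)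

lemma eq_submatrix_topMat_of_actBar_x0_eq_x0 {g : Gd K d} (hg : actBar K d g (x0 K d) = x0 K d)
    (w : LegV d) :
    (g w).1 = (topMat K d hd g w.1).submatrix (Fin.castLE w.2.isLt) (Fin.castLE w.2.isLt) := by
  obtain ⟨i, k, hk⟩ := w
  rw [eq_submatrix_castLE_of_actBar_x0_eq_x0 hg i (Nat.le_sub_one_of_lt hk)
    (Nat.sub_one_lt_of_lt hk)]
  rfl

lemma isUpperTriangular_topMat_of_actBar_x0_eq_x0 {g : Gd K d}
    (hg : actBar K d g (x0 K d) = x0 K d) (i : V) : (topMat K d hd g i).IsUpperTriangular :=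
  fun _ _ hcr => isUpperTriangular_of_actBar_x0_eq_x0 hg (topV d hd i) hcr

lemma exists_actBar_x0_eq_x0_topMat_eq {b : ∀ i, Matrix (Fin (d i)) (Fin (d i)) K}
    (hb : ∀ i, IsUnit (b i)) (htri : ∀ i, (b i).IsUpperTriangular) :
    ∃ g : Gd K d, actBar K d g (x0 K d) = x0 K d ∧ ∀ i, topMat K d hd g i = b i :=
  ⟨fun w => ((htri w.1).isUnit_submatrix_castLE (hb w.1) w.2.isLt).unit,
    (actBar_x0_eq_x0_iff _).2 fun _ => ⟨rfl, fun c => htri _ (Fin.castSucc_lt_last c)⟩,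
    fun _ => rfl⟩

lemma bijOn_topMat :
    Set.BijOn (fun g : Gd K d => fun i => topMat K d hd g i)
      {g | actBar K d g (x0 K d) = x0 K d}
      {b | (∀ i, IsUnit (b i)) ∧ ∀ i, (b i).IsUpperTriangular} := by
  refine ⟨fun g hg => ⟨fun i => (topHom hd g i).isUnit,
    isUpperTriangular_topMat_of_actBar_x0_eq_x0 hd hg⟩, fun g hg g' hg' htop => ?_,
    fun b ⟨hb, htri⟩ => ?_⟩
  · funext w
    apply Units.ext
    rw [eq_submatrix_topMat_of_actBar_x0_eq_x0 hd hg,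
      eq_submatrix_topMat_of_actBar_x0_eq_x0 hd hg',
      show topMat K d hd g w.1 = topMat K d hd g' w.1 from congrFun htop w.1]
  · obtain ⟨g, hg, htop⟩ := exists_actBar_x0_eq_x0_topMat_eq hd hb htri
    exact ⟨g, hg, funext htop⟩

lemma actFull_eq (g : Gd K d) (z : BarRep K d × QRep K s t d) :
    actFull K s t d hd g z = (actBar K d g z.1, actQ (topHom hd g) z.2) := rfl

lemma exists_actQ_eq_iff_exists_actFull_eq (x y : QRep K s t d) :
    (∃ b : ∀ i : V, (Matrix (Fin (d i)) (Fin (d i)) K)ˣ,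
        (∀ i, (b i).1.IsUpperTriangular) ∧ actQ b x = y) ↔
      ∃ g : Gd K d, actFull K s t d hd g (x0 K d, x) = (x0 K d, y) := by
  simp only [actFull_eq, Prod.mk.injEq]
  constructor
  · rintro ⟨b, htri, rfl⟩
    obtain ⟨g, hg, htop⟩ := exists_actBar_x0_eq_x0_topMat_eq hd (fun i => (b i).isUnit) htri
    exact ⟨g, hg, congrArg (actQ · x) (funext fun i => Units.ext (htop i))⟩
  · rintro ⟨g, hg, rfl⟩
    exact ⟨topHom hd g, isUpperTriangular_topMat_of_actBar_x0_eq_x0 hd hg, rfl⟩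

lemma exists_actFull_x0_eq_of_flagType (z : BarRep K d × QRep K s t d)
    (hz : FlagType K s t d z) :
    ∃ (g : Gd K d) (x : QRep K s t d), actFull K s t d hd g (x0 K d, x) = z := by
  obtain ⟨g, hg⟩ := exists_actBar_x0_eq z.1 hz
  exact ⟨g, actQ (topHom hd g)⁻¹ z.2, by rw [actFull_eq, hg, actQ_actQ_inv]⟩

end TopComponent

end LegExtendedQuiver

section Flags

variable {V A : Type} [Fintype V] [Fintype A] [DecidableEq V]
variable (K : Type) [Field K] (s t : A → V) (d : V → ℕ)

/-- Lemma 3.1: fixing the complete flags (standard flags) in `K^{d_i}` with Borel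
stabilizer `B_d` (invertible upper triangular matrices), the restriction map
`p : R_{d̂}^{flag}(Q_d) → R_{d̂}(Q̄_d)`, `z ↦ z.1`, is `G_{d̂}`-equivariant, its
image (the flag-type points of `R_{d̂}(Q̄_d)`) is the single `G_{d̂}`-orbit of the
base point `x₀` given by the standard inclusions, the stabilizer of `x₀` maps
isomorphically (via the top components, multiplicatively and bijectively) onto
`B_d`, and consequently `B_d`-orbits in `R_d(Q)` correspond bijectively to
`G_{d̂}`-orbits in `R_{d̂}^{flag}(Q_d)`. -/
theorem flag_bundle_correspondence (hd : ∀ i, 0 < d i) :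
    -- `p` is `G_{d̂}`-equivariant
    (∀ (g : Gd K d) (z : BarRep K d × QRep K s t d),
        (actFull K s t d hd g z).1 = actBar K d g z.1) ∧
    -- the flag-type locus of `R_{d̂}(Q̄_d)` is the single orbit of `x₀`
    (∀ y : BarRep K d, (∀ l, Function.Injective ((y l).mulVec)) →
        ∃ g : Gd K d, actBar K d g (x0 K d) = y) ∧
    -- the top-component map is multiplicative ...
    (∀ g h : Gd K d,
        (fun i => topMat K d hd (fun w => g w * h w) i) =
          fun i => topMat K d hd g i * topMat K d hd h i) ∧
    -- ... and restricts to a bijection from the stabilizer of `x₀` onto `B_d`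
    Set.BijOn (fun g : Gd K d => fun i => topMat K d hd g i)
      {g : Gd K d | actBar K d g (x0 K d) = x0 K d}
      {b : ∀ i : V, Matrix (Fin (d i)) (Fin (d i)) K |
        (∀ i, IsUnit (b i)) ∧
        ∀ i (r c : Fin (d i)), (c : ℕ) < (r : ℕ) → b i r c = 0} ∧
    -- consequently: `B_d`-orbits in `R_d(Q)` correspond to `G_{d̂}`-orbits of
    -- flag-type points: the orbit equivalences match up ...
    (∀ x y : QRep K s t d,
        (∃ b : ∀ i : V, (Matrix (Fin (d i)) (Fin (d i)) K)ˣ,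
            (∀ i (r c : Fin (d i)), (c : ℕ) < (r : ℕ) → (b i).1 r c = 0) ∧
            ∀ a, ((b (t a)).1 * x a) * ((b (s a))⁻¹).1 = y a) ↔
          ∃ g : Gd K d, actFull K s t d hd g (x0 K d, x) = (x0 K d, y)) ∧
    -- ... and every flag-type point of `R_{d̂}(Q_d)` is in the orbit of one
    -- coming from `R_d(Q)`
    (∀ z : BarRep K d × QRep K s t d, FlagType K s t d z →
        ∃ (g : Gd K d) (x : QRep K s t d),
          actFull K s t d hd g (x0 K d, x) = z) := by
  -- `Matrix.IsUpperTriangular` unfolds to the entrywise condition `(c : ℕ) < r → _ = 0` above.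
  refine ⟨fun _ _ => rfl, exists_actBar_x0_eq, fun g h => funext (topMat_mul hd g h),
    bijOn_topMat hd, fun x y => ?_, exists_actFull_x0_eq_of_flagType hd⟩
  exact (exists_congr fun b => and_congr Iff.rfl funext_iff).symm.trans
    (exists_actQ_eq_iff_exists_actFull_eq hd x y)

end Flags
end

section
/- Every positive imaginary root d of a quiver Q admits an element e of the fundamental domain F_Q in the same Weyl group orbit with e ≤ d componentwise. -/
set_option linter.unusedSectionVars false
set_option linter.unusedVariables false
set_option linter.deprecated false


section QuiverDefs

variable {V A : Type} [Fintype V] [Fintype A] [DecidableEq V]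

namespace ImgAux

variable (s t : A → V)

/-- basis vector -/
abbrev bV (i : V) : V → ℤ := Pi.single i 1

lemma bV_apply (i x : V) : bV i x = if x = i then 1 else 0 := Pi.single_apply i 1 x

lemma bV_nonneg (i x : V) : 0 ≤ bV i x := by rw [bV_apply]; split <;> norm_num

lemma symForm_comm (x y : V → ℤ) : symForm s t x y = symForm s t y x := add_comm _ _

lemma eulerForm_add_left (x y z : V → ℤ) :
    eulerForm s t (x + y) z = eulerForm s t x z + eulerForm s t y z := by
  simp only [eulerForm, Pi.add_apply, add_mul, Finset.sum_add_distrib]; ring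

lemma eulerForm_smul_left (c : ℤ) (x z : V → ℤ) :
    eulerForm s t (c • x) z = c * eulerForm s t x z := by
  simp only [eulerForm, Pi.smul_apply, smul_eq_mul, mul_assoc, ← Finset.mul_sum]; ring

lemma eulerForm_add_right (x y z : V → ℤ) :
    eulerForm s t z (x + y) = eulerForm s t z x + eulerForm s t z y := by
  simp only [eulerForm, Pi.add_apply, mul_add, Finset.sum_add_distrib]; ring

lemma eulerForm_smul_right (c : ℤ) (x z : V → ℤ) :
    eulerForm s t z (c • x) = c * eulerForm s t z x := by
  simp only [eulerForm, mul_sub, Finset.mul_sum, Pi.smul_apply, smul_eq_mul]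
  congr 1 <;> exact Finset.sum_congr rfl fun _ _ => by ring

lemma symForm_add_left (x y z : V → ℤ) :
    symForm s t (x + y) z = symForm s t x z + symForm s t y z := by
  simp only [symForm, eulerForm_add_left, eulerForm_add_right]; ring

lemma symForm_smul_left (c : ℤ) (x z : V → ℤ) :
    symForm s t (c • x) z = c * symForm s t x z := by
  simp only [symForm, eulerForm_smul_left, eulerForm_smul_right]; ring

lemma symForm_sub_smul_left (x : V → ℤ) (c : ℤ) (y z : V → ℤ) :
    symForm s t (x - c • y) z = symForm s t x z - c * symForm s t y z := by
  have h := symForm_add_left s t (x - c • y) (c • y) z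
  rw [sub_add_cancel, symForm_smul_left] at h
  linarith

lemma symForm_smul_add_left (a b : ℤ) (x y z : V → ℤ) :
    symForm s t (a • x + b • y) z = a * symForm s t x z + b * symForm s t y z := by
  rw [symForm_add_left, symForm_smul_left, symForm_smul_left]

lemma symForm_bV_self (hnl : ∀ a, s a ≠ t a) (i : V) : symForm s t (bV i) (bV i) = 2 := by
  have h1 : (∑ v, bV i v * bV i v) = (1 : ℤ) := by
    rw [Finset.sum_eq_single i]
    · simp
    · intro b _ hb; simp [bV_apply, hb]
    · intro h; exact absurd (Finset.mem_univ i) h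
  have h2 : (∑ a, bV i (s a) * bV i (t a)) = (0 : ℤ) := by
    apply Finset.sum_eq_zero
    intro a _
    by_cases h : s a = i
    · have : t a ≠ i := fun ht => hnl a (h.trans ht.symm)
      simp [bV_apply, this]
    · simp [bV_apply, h]
  simp [symForm, eulerForm, h1, h2]

lemma symForm_bV_nonpos {i j : V} (hij : i ≠ j) : symForm s t (bV i) (bV j) ≤ 0 := by
  have h1 : (∑ v, bV i v * bV j v) = (0 : ℤ) := by
    apply Finset.sum_eq_zero
    intro v _
    by_cases h : v = i
    · have : v ≠ j := h ▸ hij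
      simp [bV_apply, h, this, hij]
    · simp [bV_apply, h]
  have h2 : ∀ (x y : V), (0:ℤ) ≤ ∑ a, bV x (s a) * bV y (t a) :=
    fun x y => Finset.sum_nonneg fun a _ => mul_nonneg (bV_nonneg x _) (bV_nonneg y _)
  have h1' : (∑ v, bV j v * bV i v) = (0 : ℤ) := by
    rw [← h1]; exact Finset.sum_congr rfl fun v _ => mul_comm _ _
  simp only [symForm, eulerForm, h1, h1']
  have := h2 i j
  have := h2 j i
  linarith

/-- The reflection as a linear endomorphism. -/
def sigE (i : V) : Module.End ℤ (V → ℤ) where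
  toFun v := v - symForm s t v (bV i) • bV i
  map_add' x y := by simp only [symForm_add_left]; module
  map_smul' c x := by simp only [symForm_smul_left, RingHom.id_apply]; module

lemma sigE_apply (i : V) (v : V → ℤ) : sigE s t i v = v - symForm s t v (bV i) • bV i := rfl

lemma reflAt_eq (i : V) (v : V → ℤ) : reflAt s t i v = sigE s t i v := by
  funext x
  simp [reflAt, sigE_apply, Pi.sub_apply, Pi.smul_apply, smul_eq_mul]

lemma sigE_invol (hnl : ∀ a, s a ≠ t a) (i : V) (v : V → ℤ) :
    sigE s t i (sigE s t i v) = v := by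
  rw [sigE_apply, sigE_apply, symForm_sub_smul_left, symForm_bV_self s t hnl]
  module


/-- entries of the Coxeter matrix -/
def mEnt (i j : V) : ℕ :=
  if i = j then 1
  else if symForm s t (bV i) (bV j) = 0 then 2
  else if symForm s t (bV i) (bV j) = -1 then 3 else 0

/-- The Coxeter matrix of the quiver. -/
def cMat : CoxeterMatrix V where
  M := Matrix.of fun i j => mEnt s t i j
  isSymm := by
    ext i j
    simp only [Matrix.transpose_apply, Matrix.of_apply, mEnt]
    by_cases h : i = j
    · simp [h]
    · simp only [h, Ne.symm h, if_false, symForm_comm s t (bV i) (bV j)]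
  diagonal i := by simp [mEnt]
  off_diagonal i j h := by
    simp only [Matrix.of_apply, mEnt, h, if_false]
    split_ifs <;> norm_num

lemma cMat_apply (i j : V) : (cMat s t) i j = mEnt s t i j := rfl

/-- the Coxeter system -/
noncomputable def csys : CoxeterSystem (cMat s t) (cMat s t).Group :=
  (cMat s t).toCoxeterSystem

lemma sigE_liftable (hnl : ∀ a, s a ≠ t a) :
    CoxeterMatrix.IsLiftable (cMat s t) (sigE s t) := by
  intro i j
  rw [cMat_apply]
  by_cases hij : i = j
  · subst hij
    rw [mEnt, if_pos rfl, pow_one]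
    exact LinearMap.ext fun v => by
      rw [Module.End.mul_apply]; exact sigE_invol s t hnl i v
  · have h2 : symForm s t (bV i) (bV i) = 2 := symForm_bV_self s t hnl i
    have h2' : symForm s t (bV j) (bV j) = 2 := symForm_bV_self s t hnl j
    by_cases hc0 : symForm s t (bV i) (bV j) = 0
    · have hc0' : symForm s t (bV j) (bV i) = 0 := by rwa [symForm_comm]
      rw [mEnt, if_neg hij, if_pos hc0]
      refine LinearMap.ext fun v => ?_
      rw [pow_two]
      simp only [Module.End.mul_apply, Module.End.one_apply, sigE_apply,
        symForm_sub_smul_left, h2, h2', hc0, hc0']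
      module
    · by_cases hc1 : symForm s t (bV i) (bV j) = -1
      · have hc1' : symForm s t (bV j) (bV i) = -1 := by rwa [symForm_comm]
        rw [mEnt, if_neg hij, if_neg hc0, if_pos hc1]
        refine LinearMap.ext fun v => ?_
        rw [pow_succ, pow_two]
        simp only [Module.End.mul_apply, Module.End.one_apply, sigE_apply,
          symForm_sub_smul_left, h2, h2', hc1, hc1']
        module
      · rw [mEnt, if_neg hij, if_neg hc0, if_neg hc1, pow_zero]

/-- The geometric representation. -/
noncomputable def rho (hnl : ∀ a, s a ≠ t a) :
    (cMat s t).Group →* Module.End ℤ (V → ℤ) :=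
  (csys s t).lift ⟨sigE s t, sigE_liftable s t hnl⟩

lemma rho_simple (hnl : ∀ a, s a ≠ t a) (i : V) :
    rho s t hnl ((csys s t).simple i) = sigE s t i :=
  CoxeterSystem.lift_apply_simple (csys s t) (sigE_liftable s t hnl) i


open CoxeterSystem in
lemma altProd_succ (i j : V) (k : ℕ) :
    (csys s t).wordProd (alternatingWord i j (k+1))
      = (csys s t).simple (if Even k then j else i)
          * (csys s t).wordProd (alternatingWord i j k) := by
  rw [alternatingWord_succ', CoxeterSystem.wordProd_cons]

open CoxeterSystem in
lemma rho_alt_succ (hnl : ∀ a, s a ≠ t a) (i j : V) (k : ℕ) (v : V → ℤ) :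
    rho s t hnl ((csys s t).wordProd (alternatingWord i j (k+1))) v
      = sigE s t (if Even k then j else i)
          (rho s t hnl ((csys s t).wordProd (alternatingWord i j k)) v) := by
  rw [altProd_succ, map_mul, Module.End.mul_apply, rho_simple]

open CoxeterSystem in
lemma rank2_shift (hnl : ∀ a, s a ≠ t a) (i j : V) (k : ℕ)
    (h : ∃ ω : List V, ω.length + 1 ≤ k ∧
      (csys s t).wordProd (alternatingWord i j k) * (csys s t).simple i
        = (csys s t).wordProd ω) :
    ∃ ω : List V, ω.length + 1 ≤ k + 1 ∧
      (csys s t).wordProd (alternatingWord i j (k+1)) * (csys s t).simple i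
        = (csys s t).wordProd ω := by
  obtain ⟨ω, hl, he⟩ := h
  refine ⟨(if Even k then j else i) :: ω, by simp; omega, ?_⟩
  rw [altProd_succ, mul_assoc, he, ← CoxeterSystem.wordProd_cons]

open CoxeterSystem in
lemma rank2_base2 {i j : V} (hij : i ≠ j) (hc0 : symForm s t (bV i) (bV j) = 0) :
    (csys s t).wordProd (alternatingWord i j 2) * (csys s t).simple i
      = (csys s t).wordProd [j] := by
  have hM : (cMat s t) i j = 2 := by rw [cMat_apply, mEnt, if_neg hij, if_pos hc0]
  have rel := (csys s t).simple_mul_simple_pow i j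
  rw [hM, pow_two] at rel
  have halt : alternatingWord i j 2 = [i, j] := rfl
  rw [halt]
  simp only [CoxeterSystem.wordProd_cons, CoxeterSystem.wordProd_nil, mul_one, mul_assoc]
  -- goal: S i * (S j * S i) = S j
  have step : (csys s t).simple i * ((csys s t).simple j * (csys s t).simple i)
      = ((csys s t).simple i * (csys s t).simple j)
          * ((csys s t).simple i * (csys s t).simple j) * (csys s t).simple j := by
    simp [mul_assoc, (csys s t).simple_mul_simple_self]
  rw [step, rel, one_mul]

open CoxeterSystem in
lemma rank2_base3 {i j : V} (hij : i ≠ j) (hc0 : symForm s t (bV i) (bV j) ≠ 0)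
    (hc1 : symForm s t (bV i) (bV j) = -1) :
    (csys s t).wordProd (alternatingWord i j 3) * (csys s t).simple i
      = (csys s t).wordProd [i, j] := by
  have hM : (cMat s t) i j = 3 := by rw [cMat_apply, mEnt, if_neg hij, if_neg hc0, if_pos hc1]
  have rel := (csys s t).simple_mul_simple_pow i j
  rw [hM, pow_succ, pow_two] at rel
  have h2 : ((csys s t).simple i * (csys s t).simple j)
      * ((csys s t).simple i * (csys s t).simple j)
      = (csys s t).simple j * (csys s t).simple i := by
    calc ((csys s t).simple i * (csys s t).simple j)
        * ((csys s t).simple i * (csys s t).simple j)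
        = (((csys s t).simple i * (csys s t).simple j)
            * ((csys s t).simple i * (csys s t).simple j)
            * ((csys s t).simple i * (csys s t).simple j))
          * ((csys s t).simple j * (csys s t).simple i) := by
          simp [mul_assoc, (csys s t).simple_mul_simple_self]
      _ = (csys s t).simple j * (csys s t).simple i := by rw [rel, one_mul]
  have h3 := congrArg (· * (csys s t).simple j) h2
  simp only [mul_assoc, (csys s t).simple_mul_simple_self, mul_one] at h3
  -- h3 : S i * (S j * S i) = S j * (S i * S j)
  have halt : alternatingWord i j 3 = [j, i, j] := rfl
  rw [halt]
  simp only [CoxeterSystem.wordProd_cons, CoxeterSystem.wordProd_nil, mul_one, mul_assoc]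
  -- goal : S j * (S i * (S j * S i)) = S i * S j
  rw [h3]
  exact (csys s t).simple_mul_simple_cancel_left j

open CoxeterSystem in
lemma rank2_neg2 (hnl : ∀ a, s a ≠ t a) {i j : V} (hij : i ≠ j)
    (hc2 : symForm s t (bV i) (bV j) ≤ -2) (k : ℕ) :
    ∃ a b : ℤ, 0 ≤ a ∧ 0 ≤ b ∧ (if Even k then b ≤ a else a ≤ b) ∧
      rho s t hnl ((csys s t).wordProd (alternatingWord i j k)) (bV i)
        = a • bV i + b • bV j := by
  have hcji : symForm s t (bV j) (bV i) = symForm s t (bV i) (bV j) := symForm_comm s t _ _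
  set c := symForm s t (bV i) (bV j) with hc
  have h2i : symForm s t (bV i) (bV i) = 2 := symForm_bV_self s t hnl i
  have h2j : symForm s t (bV j) (bV j) = 2 := symForm_bV_self s t hnl j
  induction k with
  | zero =>
      refine ⟨1, 0, by norm_num, le_refl 0, by norm_num, ?_⟩
      show rho s t hnl ((csys s t).wordProd []) (bV i) = _
      rw [CoxeterSystem.wordProd_nil, map_one, Module.End.one_apply]
      module
  | succ k IH =>
      obtain ⟨a, b, ha, hb, hcond, hy⟩ := IH
      rw [rho_alt_succ, hy]
      rcases Nat.even_or_odd k with he | ho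
      · rw [if_pos he] at hcond ⊢
        refine ⟨a, -(a*c) - b, ha, ?_, ?_, ?_⟩
        · nlinarith [mul_nonneg ha (by linarith : (0:ℤ) ≤ -c - 2)]
        · rw [if_neg (by simp [Nat.even_add_one, he])]
          nlinarith [mul_nonneg ha (by linarith : (0:ℤ) ≤ -c - 2)]
        · rw [sigE_apply, symForm_smul_add_left, h2j, ← hc]
          module
      · rw [if_neg (Nat.not_even_iff_odd.mpr ho)] at hcond
        rw [if_neg (Nat.not_even_iff_odd.mpr ho)]
        refine ⟨-(b*c) - a, b, ?_, hb, ?_, ?_⟩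
        · nlinarith [mul_nonneg hb (by linarith : (0:ℤ) ≤ -c - 2)]
        · rw [if_pos (Nat.even_add_one.mpr (Nat.not_even_iff_odd.mpr ho))]
          nlinarith [mul_nonneg hb (by linarith : (0:ℤ) ≤ -c - 2)]
        · rw [sigE_apply, symForm_smul_add_left, h2i, hcji]
          module


open CoxeterSystem in
lemma rank2 (hnl : ∀ a, s a ≠ t a) {i j : V} (hij : i ≠ j) (k : ℕ) :
    (∃ a b : ℤ, 0 ≤ a ∧ 0 ≤ b ∧
      rho s t hnl ((csys s t).wordProd (alternatingWord i j k)) (bV i)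
        = a • bV i + b • bV j)
    ∨ (∃ ω : List V, ω.length + 1 ≤ k ∧
      (csys s t).wordProd (alternatingWord i j k) * (csys s t).simple i
        = (csys s t).wordProd ω) := by
  have hc := symForm_bV_nonpos s t hij
  have h2i := symForm_bV_self s t hnl i
  have h2j := symForm_bV_self s t hnl j
  have hcji : symForm s t (bV j) (bV i) = symForm s t (bV i) (bV j) := symForm_comm s t _ _
  have hy0 : rho s t hnl ((csys s t).wordProd (alternatingWord i j 0)) (bV i) = bV i := by
    show rho s t hnl ((csys s t).wordProd []) (bV i) = bV i
    rw [CoxeterSystem.wordProd_nil, map_one, Module.End.one_apply]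
  have hy1 : rho s t hnl ((csys s t).wordProd (alternatingWord i j 1)) (bV i)
      = bV i - symForm s t (bV i) (bV j) • bV j := by
    rw [rho_alt_succ, if_pos (Even.zero), hy0, sigE_apply]
  by_cases hc0 : symForm s t (bV i) (bV j) = 0
  · match k with
    | 0 => exact Or.inl ⟨1, 0, by norm_num, le_refl 0, by rw [hy0]; module⟩
    | 1 => exact Or.inl ⟨1, 0, by norm_num, le_refl 0, by rw [hy1, hc0]; module⟩
    | (n+2) =>
      right
      induction n with
      | zero => exact ⟨[j], by simp, rank2_base2 s t hij hc0⟩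
      | succ n IH2 => exact rank2_shift s t hnl i j (n+2) IH2
  · by_cases hc1 : symForm s t (bV i) (bV j) = -1
    · have hy2 : rho s t hnl ((csys s t).wordProd (alternatingWord i j 2)) (bV i)
          = (0:ℤ) • bV i + (1:ℤ) • bV j := by
        rw [rho_alt_succ, if_neg (by decide : ¬ Even 1), hy1, hc1, sigE_apply,
          symForm_sub_smul_left, h2i, hcji, hc1]
        module
      match k with
      | 0 => exact Or.inl ⟨1, 0, by norm_num, le_refl 0, by rw [hy0]; module⟩
      | 1 => exact Or.inl ⟨1, 1, by norm_num, by norm_num, by rw [hy1, hc1]; module⟩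
      | 2 => exact Or.inl ⟨0, 1, le_refl 0, by norm_num, hy2⟩
      | (n+3) =>
        right
        induction n with
        | zero => exact ⟨[i, j], by simp, rank2_base3 s t hij hc0 hc1⟩
        | succ n IH2 => exact rank2_shift s t hnl i j (n+3) IH2
    · have hc2 : symForm s t (bV i) (bV j) ≤ -2 := by omega
      obtain ⟨a, b, ha, hb, _, hy⟩ := rank2_neg2 s t hnl hij hc2 k
      exact Or.inl ⟨a, b, ha, hb, hy⟩

open CoxeterSystem in
lemma posP (hnl : ∀ a, s a ≠ t a) : ∀ n : ℕ, ∀ w : (cMat s t).Group,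
    (csys s t).length w ≤ n →
    ∀ i : V, (csys s t).length w < (csys s t).length (w * (csys s t).simple i) →
    ∀ x : V, 0 ≤ rho s t hnl w (bV i) x := by
  intro n
  induction n using Nat.strong_induction_on with
  | _ n IH =>
  intro w hwn i hi x
  by_cases h1 : w = 1
  · subst h1; rw [map_one, Module.End.one_apply]; exact bV_nonneg i x
  obtain ⟨j, hj⟩ := (csys s t).exists_rightDescent_of_ne_one h1
  have hj' : (csys s t).length (w * (csys s t).simple j) + 1 = (csys s t).length w :=
    ((csys s t).isRightDescent_iff).mp hj
  have hij : i ≠ j := by rintro rfl; omega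
  have hlw1 : 1 ≤ (csys s t).length w := by
    rcases Nat.eq_zero_or_pos ((csys s t).length w) with h0 | h
    · exact absurd ((csys s t).length_eq_zero_iff.mp h0) h1
    · exact h
  set K : ℕ → Prop := fun m => ∃ u, w = u * (csys s t).wordProd (alternatingWord i j m) ∧
    (csys s t).length u + m = (csys s t).length w with hK
  haveI : DecidablePred K := Classical.decPred K
  have hK1 : K 1 := by
    refine ⟨w * (csys s t).simple j, ?_, by omega⟩
    have h1j : (csys s t).wordProd (alternatingWord i j 1) = (csys s t).simple j := by
      show (csys s t).wordProd [j] = (csys s t).simple j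
      exact (csys s t).wordProd_singleton j
    rw [h1j, (csys s t).simple_mul_simple_cancel_right]
  obtain ⟨k', hk⟩ : ∃ k'', Nat.findGreatest K ((csys s t).length w) = k'' + 1 :=
    ⟨Nat.findGreatest K ((csys s t).length w) - 1,
      by have := Nat.le_findGreatest hlw1 hK1; omega⟩
  have hkspec : K (k' + 1) := hk ▸ Nat.findGreatest_spec (P := K) hlw1 hK1
  obtain ⟨u, hwu, hlu⟩ := hkspec
  have ealt : (csys s t).length ((csys s t).wordProd (alternatingWord i j k')) ≤ k' := by
    have := (csys s t).length_wordProd_le (alternatingWord i j k')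
    rwa [length_alternatingWord] at this
  -- no descent at the head letter of the alternating word
  have hq : (csys s t).length u
      < (csys s t).length (u * (csys s t).simple (if Even k' then j else i)) := by
    by_contra hcon
    push_neg at hcon
    have hne := (csys s t).length_mul_simple_ne u (if Even k' then j else i)
    rcases (csys s t).length_mul_simple u (if Even k' then j else i) with hd | hd
    · omega
    · have hw2 : w = (u * (csys s t).simple (if Even k' then j else i))
          * (csys s t).wordProd (alternatingWord i j k') := by
        rw [hwu, alternatingWord_succ' i j k', CoxeterSystem.wordProd_cons, ← mul_assoc]
      have e1 := (csys s t).length_mul_le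
        (u * (csys s t).simple (if Even k' then j else i))
        ((csys s t).wordProd (alternatingWord i j k'))
      rw [← hw2] at e1
      omega
  -- cannot extend the alternating word
  have hp : (csys s t).length u
      < (csys s t).length (u * (csys s t).simple (if Even (k'+1) then j else i)) := by
    by_contra hcon
    push_neg at hcon
    have hne := (csys s t).length_mul_simple_ne u (if Even (k'+1) then j else i)
    rcases (csys s t).length_mul_simple u (if Even (k'+1) then j else i) with hd | hd
    · omega
    · have hw3 : (u * (csys s t).simple (if Even (k'+1) then j else i))
          * (csys s t).wordProd (alternatingWord i j (k'+2))
          = u * (csys s t).wordProd (alternatingWord i j (k'+1)) := by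
        rw [alternatingWord_succ' i j (k'+1), CoxeterSystem.wordProd_cons, mul_assoc,
          (csys s t).simple_mul_simple_cancel_left]
      have hK2 : K (k'+2) := ⟨u * (csys s t).simple (if Even (k'+1) then j else i),
        by rw [hw3, ← hwu], by omega⟩
      have hb2 : k' + 2 ≤ (csys s t).length w := by omega
      have := Nat.le_findGreatest hb2 hK2
      rw [hk] at this
      omega
  have hdi : (csys s t).length u < (csys s t).length (u * (csys s t).simple i) := by
    rcases Nat.even_or_odd k' with he | ho
    · rwa [if_neg (by simp [Nat.even_add_one, he])] at hp
    · rwa [if_neg (by simp [Nat.not_even_iff_odd.mpr ho])] at hq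
  have hdj : (csys s t).length u < (csys s t).length (u * (csys s t).simple j) := by
    rcases Nat.even_or_odd k' with he | ho
    · rwa [if_pos he] at hq
    · rwa [if_pos (by simp [Nat.even_add_one, Nat.not_even_iff_odd.mpr ho])] at hp
  have hun : (csys s t).length u < n := by omega
  have Pui := IH ((csys s t).length u) hun u le_rfl i hdi x
  have Puj := IH ((csys s t).length u) hun u le_rfl j hdj x
  rcases rank2 s t hnl hij (k'+1) with ⟨a, b, ha, hb, hy⟩ | ⟨ω, hωl, hωe⟩
  · have hsplit : rho s t hnl w (bV i)
        = rho s t hnl u (rho s t hnl ((csys s t).wordProd (alternatingWord i j (k'+1))) (bV i)) := by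
      rw [hwu, map_mul, Module.End.mul_apply]
    rw [hsplit, hy, map_add, map_smul, map_smul]
    simp only [Pi.add_apply, Pi.smul_apply, smul_eq_mul]
    exact add_nonneg (mul_nonneg ha Pui) (mul_nonneg hb Puj)
  · exfalso
    have hws : w * (csys s t).simple i = u * (csys s t).wordProd ω := by
      rw [hwu, mul_assoc, hωe]
    have l1 := (csys s t).length_mul_le u ((csys s t).wordProd ω)
    have l2 := (csys s t).length_wordProd_le ω
    rw [← hws] at l1
    omega


open CoxeterSystem in
lemma domLe (hnl : ∀ a, s a ≠ t a) : ∀ n : ℕ, ∀ w : (cMat s t).Group,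
    (csys s t).length w ≤ n →
    ∀ f : V → ℤ, (∀ i, symForm s t f (bV i) ≤ 0) →
    ∀ x : V, f x ≤ rho s t hnl w f x := by
  intro n
  induction n using Nat.strong_induction_on with
  | _ n IH =>
  intro w hwn f hf x
  by_cases h1 : w = 1
  · rw [h1, map_one, Module.End.one_apply]
  obtain ⟨j, hj⟩ := (csys s t).exists_rightDescent_of_ne_one h1
  have hj' : (csys s t).length (w * (csys s t).simple j) + 1 = (csys s t).length w :=
    ((csys s t).isRightDescent_iff).mp hj
  have hw : w = (w * (csys s t).simple j) * (csys s t).simple j :=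
    ((csys s t).simple_mul_simple_cancel_right j).symm
  have hdu : (csys s t).length (w * (csys s t).simple j)
      < (csys s t).length ((w * (csys s t).simple j) * (csys s t).simple j) := by
    rw [← hw]; omega
  have hP := posP s t hnl ((csys s t).length (w * (csys s t).simple j))
    (w * (csys s t).simple j) le_rfl j hdu x
  have hIH := IH ((csys s t).length (w * (csys s t).simple j)) (by omega)
    (w * (csys s t).simple j) le_rfl f hf x
  have hsplit : rho s t hnl w f
      = rho s t hnl (w * (csys s t).simple j) (sigE s t j f) := by
    conv_lhs => rw [hw]
    rw [map_mul, Module.End.mul_apply, rho_simple]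
  rw [hsplit, sigE_apply, map_sub, map_smul]
  simp only [Pi.sub_apply, Pi.smul_apply, smul_eq_mul]
  nlinarith [mul_nonpos_of_nonpos_of_nonneg (hf j) hP]

open CoxeterSystem in
lemma foldl_eq_rho (hnl : ∀ a, s a ≠ t a) : ∀ (l : List V) (v : V → ℤ),
    l.foldl (fun f i => reflAt s t i f) v
      = rho s t hnl ((csys s t).wordProd l.reverse) v := by
  intro l
  induction l with
  | nil => intro v; simp only [List.foldl_nil, List.reverse_nil,
      CoxeterSystem.wordProd_nil, map_one, Module.End.one_apply]
  | cons i l IH =>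
    intro v
    show l.foldl _ (reflAt s t i v) = _
    rw [IH (reflAt s t i v), List.reverse_cons, CoxeterSystem.wordProd_append,
      map_mul, Module.End.mul_apply, CoxeterSystem.wordProd_singleton, rho_simple,
      reflAt_eq]

lemma foldl_invol (hnl : ∀ a, s a ≠ t a) : ∀ (l : List V) (v : V → ℤ),
    (l.reverse).foldl (fun f i => reflAt s t i f)
      (l.foldl (fun f i => reflAt s t i f) v) = v := by
  intro l
  induction l with
  | nil => intro v; rfl
  | cons i l IH =>
    intro v
    rw [List.reverse_cons, List.foldl_append]
    show reflAt s t i ((l.reverse).foldl _ (l.foldl _ (reflAt s t i v))) = v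
    rw [IH (reflAt s t i v), reflAt_eq, reflAt_eq, sigE_invol s t hnl]

lemma imroot_decomp {d : V → ℤ} (him : IsImaginaryRoot s t d) :
    ∃ (f : V → ℤ) (l : List V), inFund s t f ∧
      d = l.foldl (fun g i => reflAt s t i g) f := by
  induction him with
  | fund f h => exact ⟨f, [], h, rfl⟩
  | refl i g _ ih =>
    obtain ⟨f, l, hf, hd⟩ := ih
    refine ⟨f, l ++ [i], hf, ?_⟩
    rw [List.foldl_append, ← hd]
    rfl

end ImgAux

/-- Every positive imaginary root `d` of a loop-free quiver admits an element `e`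
of the fundamental domain in the same Weyl group orbit (obtained from `d` by a
sequence of simple reflections) with `e ≤ d` componentwise. -/
theorem imaginary_root_dominated_by_fundamental (s t : A → V)
    (hnoloops : ∀ a, s a ≠ t a) (d : V → ℤ)
    (him : IsImaginaryRoot s t d) (hpos : ∀ i, 0 ≤ d i) :
    ∃ e : V → ℤ, inFund s t e ∧
      (∃ l : List V, e = l.foldl (fun f i => reflAt s t i f) d) ∧
      ∀ i, e i ≤ d i := by
  classical
  obtain ⟨f, l, hf, hd⟩ := ImgAux.imroot_decomp s t him
  refine ⟨f, hf, ⟨l.reverse, ?_⟩, ?_⟩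
  · rw [hd]
    exact (ImgAux.foldl_invol s t hnoloops l f).symm
  · intro x
    have hT := ImgAux.domLe s t hnoloops
      ((ImgAux.csys s t).length ((ImgAux.csys s t).wordProd l.reverse))
      ((ImgAux.csys s t).wordProd l.reverse) le_rfl f hf.2.2.2 x
    rw [hd, ImgAux.foldl_eq_rho s t hnoloops l f]
    exact hT

end QuiverDefs
end
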